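/- arXiv:2512.08375 — 3 statements merged into one kernel-verified Lean document; each statement's English description precedes it below -/
import Mathlib

section
/- Let u, v : ℝⁿ → (-∞,∞] be proper lower semicontinuous convex functions such that the pointwise minimum u ∧ v is convex. Then (u ∧ v)* = u* ∨ v* and (u ∨ v)* = u* ∧ v*, where ∨ denotes pointwise maximum. -/
open scoped RealInnerProductSpace Pointwise Classical

/-- The Legendre transform (convex conjugate) of an extended-real-valued function. -/
noncomputable def legendre {n : ℕ} (u : EuclideanSpace ℝ (Fin n) → EReal)
    (x : EuclideanSpace ℝ (Fin n)) : EReal :=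
  ⨆ y, ((⟪x, y⟫ : ℝ) : EReal) - u y

/-- Convexity for extended-real-valued functions. -/
def ConvexE {n : ℕ} (u : EuclideanSpace ℝ (Fin n) → EReal) : Prop :=
  ∀ x y : EuclideanSpace ℝ (Fin n), ∀ a b : ℝ, 0 ≤ a → 0 ≤ b → a + b = 1 →
    u (a • x + b • y) ≤ (a : EReal) * u x + (b : EReal) * u y

/-- Properness: never `⊥` and not identically `⊤`. -/
def ProperE {n : ℕ} (u : EuclideanSpace ℝ (Fin n) → EReal) : Prop :=
  (∀ x, u x ≠ ⊥) ∧ (∃ x, u x ≠ ⊤)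

/-- Subdifferential of an extended-real-valued function. -/
def subdiff {n : ℕ} (v : EuclideanSpace ℝ (Fin n) → EReal)
    (x : EuclideanSpace ℝ (Fin n)) : Set (EuclideanSpace ℝ (Fin n)) :=
  {y | ∀ z, v x + ((⟪y, z - x⟫ : ℝ) : EReal) ≤ v z}

/-- Infimal convolution. -/
noncomputable def infConv {n : ℕ} (u v : EuclideanSpace ℝ (Fin n) → EReal)
    (x : EuclideanSpace ℝ (Fin n)) : EReal :=
  ⨅ y, u y + v (x - y)

/-- The unit cube `[-1,1]ⁿ`. -/
def cube (n : ℕ) : Set (EuclideanSpace ℝ (Fin n)) := {x | ∀ i, |x i| ≤ 1}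

/-- The constrained Moreau envelope `u □ ((λ/2)‖·‖² + I_{μC})`. -/
noncomputable def env {n : ℕ} (u : EuclideanSpace ℝ (Fin n) → EReal) (l μ : ℝ)
    (x : EuclideanSpace ℝ (Fin n)) : EReal :=
  ⨅ y ∈ {y | u y ≠ ⊤ ∧ x - y ∈ μ • cube n},
    u y + (((l / 2) * ‖x - y‖ ^ 2 : ℝ) : EReal)


/-! The first identity and the inequality `(u ∨ v)* ≤ u* ∧ v*` hold pointwise. Conversely, if
`(u ∨ v)*(x) < t < u*(x) ∧ v*(x)`, the affine function `h = ⟪x, ·⟫ - t` exceeds `u` at some `y₁` and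
`v` at some `y₂`, hence, by convexity, exceeds `u ∧ v` on the segment `[y₁, y₂]`, while `u ∨ v > h`
everywhere. The sets `{h < u}` and `{h < v}` are open by lower semicontinuity, cover the segment, meet
it (at `y₂` and `y₁`), and are disjoint on it: this contradicts connectedness of the segment. -/

lemma EReal.antitone_sub_left (a : EReal) : Antitone (a - ·) :=
  fun _ _ h => EReal.sub_le_sub le_rfl h

lemma EReal.coe_sub_lt_coe_iff {a t : ℝ} {b : EReal} :
    (a : EReal) - b < t ↔ ((a - t : ℝ) : EReal) < b := by
  induction b using EReal.rec with
  | bot => simp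
  | coe r => norm_cast; constructor <;> intro h <;> linarith
  | top => simp [- EReal.coe_sub]

lemma EReal.coe_lt_coe_sub_iff {a t : ℝ} {b : EReal} :
    (t : EReal) < a - b ↔ b < ((a - t : ℝ) : EReal) := by
  induction b using EReal.rec with
  | bot => simp [- EReal.coe_sub]
  | coe r => norm_cast; constructor <;> intro h <;> linarith
  | top => simp

lemma EReal.coe_mul_add_coe_mul_lt {a b r s : ℝ} {x y : EReal} (ha : 0 ≤ a) (hb : 0 ≤ b)
    (hab : a + b = 1) (hx : x < r) (hy : y < s) :
    (a : EReal) * x + b * y < ((a * r + b * s : ℝ) : EReal) := by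
  obtain ⟨c, hxc, hcr'⟩ := EReal.exists_between_coe_real hx
  obtain ⟨d, hyd, hds'⟩ := EReal.exists_between_coe_real hy
  have hcr : c < r := by exact_mod_cast hcr'
  have hds : d < s := by exact_mod_cast hds'
  calc (a : EReal) * x + b * y ≤ a * c + b * d :=
        add_le_add (mul_le_mul_of_nonneg_left hxc.le (by exact_mod_cast ha))
          (mul_le_mul_of_nonneg_left hyd.le (by exact_mod_cast hb))
    _ = ((a * c + b * d : ℝ) : EReal) := by norm_cast
    _ < ((a * r + b * s : ℝ) : EReal) := by
        have : 0 < min (r - c) (s - d) := lt_min (by linarith) (by linarith)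
        exact_mod_cast (by nlinarith [mul_le_mul_of_nonneg_left (min_le_left (r - c) (s - d)) ha,
          mul_le_mul_of_nonneg_left (min_le_right (r - c) (s - d)) hb] :
          a * c + b * d < a * r + b * s)

lemma LowerSemicontinuous.isOpen_setOf_lt {X β : Type*} [TopologicalSpace X] [LinearOrder β]
    [DenselyOrdered β] [TopologicalSpace β] [OrderTopology β] {f g : X → β}
    (hf : LowerSemicontinuous f) (hg : Continuous g) : IsOpen {x | g x < f x} := by
  refine isOpen_iff_mem_nhds.mpr fun x (hx : g x < f x) => ?_
  obtain ⟨c, hgc, hcf⟩ := exists_between hx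
  filter_upwards [hf x c hcf, hg.continuousAt.eventually (gt_mem_nhds hgc)] with y hcy hyc
  exact hyc.trans hcy

theorem IsPreconnected.exists_max_le_of_lowerSemicontinuous {X β : Type*} [TopologicalSpace X]
    [LinearOrder β] [DenselyOrdered β] [TopologicalSpace β] [OrderTopology β] {S : Set X}
    {f g h : X → β} {a b : X} (hS : IsPreconnected S) (hf : LowerSemicontinuous f)
    (hg : LowerSemicontinuous g) (hh : Continuous h) (hmin : ∀ z ∈ S, min (f z) (g z) < h z)
    (ha : a ∈ S) (hfa : f a < h a) (hb : b ∈ S) (hgb : g b < h b) :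
    ∃ z ∈ S, max (f z) (g z) ≤ h z := by
  by_contra! hmax
  obtain ⟨z, hzS, hhf, hhg⟩ := hS _ _ (hf.isOpen_setOf_lt hh) (hg.isOpen_setOf_lt hh)
    (fun z hz => lt_max_iff.mp (hmax z hz))
    ⟨b, hb, (lt_max_iff.mp (hmax b hb)).resolve_right hgb.not_gt⟩
    ⟨a, ha, (lt_max_iff.mp (hmax a ha)).resolve_left hfa.not_gt⟩
  exact (hmin z hzS).not_gt (lt_min hhf hhg)

lemma ConvexE.lt_of_mem_segment {n : ℕ} {w : EuclideanSpace ℝ (Fin n) → EReal}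
    (hw : ConvexE w) {x y₁ y₂ z : EuclideanSpace ℝ (Fin n)} {t : ℝ}
    (h₁ : w y₁ < ((⟪x, y₁⟫ - t : ℝ) : EReal)) (h₂ : w y₂ < ((⟪x, y₂⟫ - t : ℝ) : EReal))
    (hz : z ∈ segment ℝ y₁ y₂) : w z < ((⟪x, z⟫ - t : ℝ) : EReal) := by
  obtain ⟨a, b, ha, hb, hab, rfl⟩ := hz
  refine (hw y₁ y₂ a b ha hb hab).trans_lt ?_
  convert EReal.coe_mul_add_coe_mul_lt ha hb hab h₁ h₂ using 2
  rw [inner_add_right, real_inner_smul_right, real_inner_smul_right]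
  linear_combination t * hab

lemma legendre_min {n : ℕ} (u v : EuclideanSpace ℝ (Fin n) → EReal)
    (x : EuclideanSpace ℝ (Fin n)) :
    legendre (fun y => min (u y) (v y)) x = max (legendre u x) (legendre v x) := by
  simp only [legendre, (EReal.antitone_sub_left _).map_min, iSup_sup_eq]

lemma legendre_max_le {n : ℕ} (u v : EuclideanSpace ℝ (Fin n) → EReal)
    (x : EuclideanSpace ℝ (Fin n)) :
    legendre (fun y => max (u y) (v y)) x ≤ min (legendre u x) (legendre v x) := by
  simp only [legendre, (EReal.antitone_sub_left _).map_max]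
  exact le_inf (iSup_mono fun _ => inf_le_left) (iSup_mono fun _ => inf_le_right)

lemma min_legendre_le_legendre_max {n : ℕ} {u v : EuclideanSpace ℝ (Fin n) → EReal}
    (hul : LowerSemicontinuous u) (hvl : LowerSemicontinuous v)
    (hmin : ConvexE fun z => min (u z) (v z)) (x : EuclideanSpace ℝ (Fin n)) :
    min (legendre u x) (legendre v x) ≤ legendre (fun y => max (u y) (v y)) x := by
  by_contra! hlt
  obtain ⟨t, hmax_t, ht_min⟩ := EReal.exists_between_coe_real hlt
  obtain ⟨y₁, hy₁⟩ := lt_iSup_iff.mp (ht_min.trans_le (min_le_left _ _))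
  obtain ⟨y₂, hy₂⟩ := lt_iSup_iff.mp (ht_min.trans_le (min_le_right _ _))
  rw [EReal.coe_lt_coe_sub_iff] at hy₁ hy₂
  have hmax (z : EuclideanSpace ℝ (Fin n)) : ((⟪x, z⟫ - t : ℝ) : EReal) < max (u z) (v z) :=
    EReal.coe_sub_lt_coe_iff.mp
      ((le_iSup (fun z => ((⟪x, z⟫ : ℝ) : EReal) - max (u z) (v z)) z).trans_lt hmax_t)
  obtain ⟨z, -, hz⟩ := (convex_segment y₁ y₂).isPreconnected.exists_max_le_of_lowerSemicontinuous
    hul hvl (continuous_coe_real_ereal.comp (by fun_prop))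
    (fun z hz => hmin.lt_of_mem_segment ((min_le_left _ _).trans_lt hy₁)
      ((min_le_right _ _).trans_lt hy₂) hz)
    (left_mem_segment ℝ y₁ y₂) hy₁ (right_mem_segment ℝ y₁ y₂) hy₂
  exact (hmax z).not_ge hz

theorem legendre_min_max_general {n : ℕ} (u v : EuclideanSpace ℝ (Fin n) → EReal)
    (hul : LowerSemicontinuous u)
    (hvl : LowerSemicontinuous v)
    (hmin : ConvexE (fun x => min (u x) (v x))) :
    (∀ x : EuclideanSpace ℝ (Fin n),
      legendre (fun y => min (u y) (v y)) x = max (legendre u x) (legendre v x)) ∧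
    (∀ x : EuclideanSpace ℝ (Fin n),
      legendre (fun y => max (u y) (v y)) x = min (legendre u x) (legendre v x)) :=
  ⟨legendre_min u v, fun x =>
    (legendre_max_le u v x).antisymm (min_legendre_le_legendre_max hul hvl hmin x)⟩

theorem legendre_min_max {n : ℕ} (u v : EuclideanSpace ℝ (Fin n) → EReal)
    (hup : ProperE u) (hul : LowerSemicontinuous u) (huc : ConvexE u)
    (hvp : ProperE v) (hvl : LowerSemicontinuous v) (hvc : ConvexE v)
    (hmin : ConvexE (fun x => min (u x) (v x))) :
    (∀ x : EuclideanSpace ℝ (Fin n),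
      legendre (fun y => min (u y) (v y)) x = max (legendre u x) (legendre v x)) ∧
    (∀ x : EuclideanSpace ℝ (Fin n),
      legendre (fun y => max (u y) (v y)) x = min (legendre u x) (legendre v x)) :=
  legendre_min_max_general u v hul hvl hmin
end

section
/- The function q(x) = ‖x‖²/2 on ℝⁿ is the unique proper lower semicontinuous convex function equal to its own Legendre transform: q* = q, and if u is proper, lower semicontinuous, convex with u* = u, then u = q. -/
open scoped RealInnerProductSpace Pointwise Classical

lemma aux_part1 {n : ℕ} (x : EuclideanSpace ℝ (Fin n)) :
    legendre (fun y : EuclideanSpace ℝ (Fin n) => ((‖y‖ ^ 2 / 2 : ℝ) : EReal)) x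
      = ((‖x‖ ^ 2 / 2 : ℝ) : EReal) := by
  unfold legendre
  apply le_antisymm
  · apply iSup_le; intro y
    rw [← EReal.coe_sub, EReal.coe_le_coe_iff]
    nlinarith [sq_nonneg (‖x - y‖), norm_sub_sq_real x y]
  · have h := le_iSup (fun y => ((⟪x, y⟫ : ℝ) : EReal) - (fun y : EuclideanSpace ℝ (Fin n) => ((‖y‖ ^ 2 / 2 : ℝ) : EReal)) y) x
    simp only at h
    rw [← EReal.coe_sub, real_inner_self_eq_norm_sq] at h
    refine le_trans (le_of_eq ?_) h
    rw [EReal.coe_eq_coe_iff]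
    ring

lemma aux_lower {n : ℕ} (u : EuclideanSpace ℝ (Fin n) → EReal) (hb : ∀ x, u x ≠ ⊥)
    (hself : ∀ x, legendre u x = u x) (x : EuclideanSpace ℝ (Fin n)) :
    ((‖x‖ ^ 2 / 2 : ℝ) : EReal) ≤ u x := by
  by_cases htop : u x = ⊤
  · simp [htop]
  · have key : ((⟪x, x⟫ : ℝ) : EReal) - u x ≤ u x := by
      have h2 := le_iSup (fun y => ((⟪x, y⟫ : ℝ) : EReal) - u y) x
      rwa [show (⨆ y, ((⟪x, y⟫ : ℝ) : EReal) - u y) = u x from hself x] at h2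
    lift u x to ℝ using ⟨htop, hb x⟩ with r hr
    rw [← EReal.coe_sub, EReal.coe_le_coe_iff] at key
    rw [EReal.coe_le_coe_iff]
    rw [real_inner_self_eq_norm_sq] at key
    linarith

lemma aux_part2 {n : ℕ} (u : EuclideanSpace ℝ (Fin n) → EReal) (hb : ∀ x, u x ≠ ⊥)
    (hself : ∀ x, legendre u x = u x) (x : EuclideanSpace ℝ (Fin n)) :
    u x = ((‖x‖ ^ 2 / 2 : ℝ) : EReal) := by
  refine le_antisymm ?_ (aux_lower u hb hself x)
  rw [← hself x]
  rw [← aux_part1 x]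
  apply iSup_mono
  intro y
  exact EReal.sub_le_sub le_rfl (aux_lower u hb hself y)

theorem legendre_selfDual_unique {n : ℕ} :
    (∀ x : EuclideanSpace ℝ (Fin n),
      legendre (fun y : EuclideanSpace ℝ (Fin n) => ((‖y‖ ^ 2 / 2 : ℝ) : EReal)) x = ((‖x‖ ^ 2 / 2 : ℝ) : EReal)) ∧
    (∀ u : EuclideanSpace ℝ (Fin n) → EReal, ProperE u → LowerSemicontinuous u → ConvexE u →
      (∀ x, legendre u x = u x) → ∀ x : EuclideanSpace ℝ (Fin n), u x = ((‖x‖ ^ 2 / 2 : ℝ) : EReal)) := by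
  exact ⟨aux_part1, fun u hu _ _ hself x => aux_part2 u hu.1 hself x⟩
end

section
/- Let u : ℝⁿ → (-∞,∞] be proper, lower semicontinuous, convex with compact effective domain, and for λ, μ > 0 let u_{λ,μ} = u □ ((λ/2)‖·‖² + I_{μC}) with C = [-1,1]ⁿ. Then dom u_{λ,μ} = dom u + μC, and for fixed λ > 0 the functions u_{λ,μ} epi-converge to u as μ → 0. -/
open scoped RealInnerProductSpace Pointwise Classical

lemma norm_le_of_mem_smul_cube {n : ℕ} {μ : ℝ} (hμ : 0 < μ) {z : EuclideanSpace ℝ (Fin n)}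
    (hz : z ∈ μ • cube n) : ‖z‖ ≤ μ * Real.sqrt n := by
  obtain ⟨w, hw, rfl⟩ := hz
  rw [norm_smul, Real.norm_eq_abs, abs_of_pos hμ]
  gcongr
  rw [EuclideanSpace.norm_eq]
  have : ∑ i, ‖w i‖ ^ 2 ≤ (n : ℝ) := by
    calc ∑ i, ‖w i‖ ^ 2 ≤ ∑ _i : Fin n, (1:ℝ) := by
          apply Finset.sum_le_sum
          intro i _
          have := hw i
          rw [Real.norm_eq_abs]
          nlinarith [abs_nonneg (w i)]
      _ = n := by simp
  exact Real.sqrt_le_sqrt this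

lemma env_le_self {n : ℕ} (u : EuclideanSpace ℝ (Fin n) → EReal) (l μ : ℝ)
    (x : EuclideanSpace ℝ (Fin n)) : env u l μ x ≤ u x := by
  by_cases hx : u x = ⊤
  · rw [hx]; exact le_top
  · have h0 : x - x ∈ μ • cube n := by
      rw [sub_self]
      exact ⟨0, fun i => by simp [cube], by simp⟩
    calc env u l μ x ≤ u x + (((l / 2) * ‖x - x‖ ^ 2 : ℝ) : EReal) :=
          iInf₂_le x ⟨hx, h0⟩
      _ = u x := by rw [sub_self, norm_zero]; norm_num

lemma env_liminf_lower {n : ℕ} (u : EuclideanSpace ℝ (Fin n) → EReal)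
    (hl : LowerSemicontinuous u) (l : ℝ) (hl0 : 0 < l)
    (μ : ℕ → ℝ) (hμ : ∀ k, 0 < μ k) (hμ0 : Filter.Tendsto μ Filter.atTop (nhds 0))
    (x : EuclideanSpace ℝ (Fin n)) (xk : ℕ → EuclideanSpace ℝ (Fin n))
    (hxk : Filter.Tendsto xk Filter.atTop (nhds x)) :
    u x ≤ Filter.liminf (fun k => env u l (μ k) (xk k)) Filter.atTop := by
  rw [Filter.le_liminf_iff]
  intro c hc
  obtain ⟨c', hcc', hc'x⟩ := exists_between hc
  obtain ⟨ε, hε, hball⟩ := Metric.eventually_nhds_iff.mp (hl x c' hc'x)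
  have h1 : ∀ᶠ k in Filter.atTop, dist (xk k) x < ε / 2 :=
    hxk.eventually (Metric.ball_mem_nhds x (half_pos hε))
  have h2 : Filter.Tendsto (fun k => μ k * Real.sqrt n) Filter.atTop (nhds 0) := by
    simpa using hμ0.mul_const (Real.sqrt n)
  have h3 : ∀ᶠ k in Filter.atTop, μ k * Real.sqrt n < ε / 2 :=
    h2.eventually (gt_mem_nhds (half_pos hε))
  filter_upwards [h1, h3] with k hk1 hk3
  refine lt_of_lt_of_le hcc' (le_iInf₂ fun y hy => ?_)
  have hny : ‖xk k - y‖ ≤ μ k * Real.sqrt n := norm_le_of_mem_smul_cube (hμ k) hy.2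
  have hdy : dist y x < ε := by
    have : dist y (xk k) = ‖xk k - y‖ := by rw [dist_eq_norm, norm_sub_rev]
    calc dist y x ≤ dist y (xk k) + dist (xk k) x := dist_triangle _ _ _
      _ < ε / 2 + ε / 2 := by rw [this]; exact add_lt_add (lt_of_le_of_lt hny hk3) hk1
      _ = ε := by ring
  have hcy : c' < u y := hball hdy
  calc c' ≤ u y := hcy.le
    _ ≤ u y + (((l / 2) * ‖xk k - y‖ ^ 2 : ℝ) : EReal) := by
        apply le_add_of_nonneg_right
        exact EReal.coe_nonneg.mpr (by positivity)

theorem env_dom_and_epiConvergence {n : ℕ} (u : EuclideanSpace ℝ (Fin n) → EReal) (hp : ProperE u) (hl : LowerSemicontinuous u) (hc : ConvexE u)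
    (hcomp : IsCompact {x | u x ≠ ⊤}) (l : ℝ) (hl0 : 0 < l) :
    (∀ μ : ℝ, 0 < μ → {x | env u l μ x ≠ ⊤} = {x | u x ≠ ⊤} + μ • cube n) ∧
    (∀ μ : ℕ → ℝ, (∀ k, 0 < μ k) → Filter.Tendsto μ Filter.atTop (nhds 0) →
      (∀ x : EuclideanSpace ℝ (Fin n), ∀ xk : ℕ → EuclideanSpace ℝ (Fin n), Filter.Tendsto xk Filter.atTop (nhds x) →
        u x ≤ Filter.liminf (fun k => env u l (μ k) (xk k)) Filter.atTop) ∧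
      (∀ x : EuclideanSpace ℝ (Fin n), ∃ xk : ℕ → EuclideanSpace ℝ (Fin n), Filter.Tendsto xk Filter.atTop (nhds x) ∧
        Filter.Tendsto (fun k => env u l (μ k) (xk k)) Filter.atTop (nhds (u x)))) := by
  constructor
  · intro μ hμ
    ext x
    simp only [Set.mem_setOf_eq]
    constructor
    · intro h
      by_contra h'
      apply h
      unfold env
      rw [iInf_eq_top]
      intro y
      apply iInf_neg
      rintro ⟨h1, h2⟩
      apply h'
      have : y + (x - y) ∈ {x | u x ≠ ⊤} + μ • cube n := Set.add_mem_add h1 h2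
      simpa using this
    · intro hx
      rw [Set.mem_add] at hx
      obtain ⟨a, ha, b, hb, rfl⟩ := hx
      have hfeas : a ∈ {y | u y ≠ ⊤ ∧ (a + b) - y ∈ μ • cube n} := by
        refine ⟨ha, ?_⟩
        rwa [add_sub_cancel_left]
      have hle : env u l μ (a + b) ≤ u a + (((l / 2) * ‖(a + b) - a‖ ^ 2 : ℝ) : EReal) :=
        iInf₂_le a hfeas
      have hlt : u a + (((l / 2) * ‖(a + b) - a‖ ^ 2 : ℝ) : EReal) < ⊤ :=
        EReal.add_lt_top ha (EReal.coe_ne_top _)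
      exact (lt_of_le_of_lt hle hlt).ne
  · intro μ hμ hμ0
    constructor
    · intro x xk hxk
      exact env_liminf_lower u hl l hl0 μ hμ hμ0 x xk hxk
    · intro x
      refine ⟨fun _ => x, tendsto_const_nhds, ?_⟩
      apply tendsto_of_le_liminf_of_limsup_le
      · exact env_liminf_lower u hl l hl0 μ hμ hμ0 x (fun _ => x) tendsto_const_nhds
      · exact Filter.limsup_le_of_le (by isBoundedDefault)
          (Filter.Eventually.of_forall fun k => env_le_self u l (μ k) x)
      · isBoundedDefault
      · isBoundedDefault
end
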